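/- Let G be the presented group on generators α, α′, γ, γ′, δ, δ′ with the relations R₁₁ together with the additional relations γ = γ′ = δ = δ′. Then G is abelian. -/
import Mathlib


/-- The relations of the reduced braid group `B̄₃`:
`σ₁σ₂σ₁ = σ₂σ₁σ₂` and `(σ₁σ₂)³ = 1`. -/
def bbar3Rels : Set (FreeGroup (Fin 2)) :=
  { FreeGroup.of 0 * FreeGroup.of 1 * FreeGroup.of 0 *
      (FreeGroup.of 1 * FreeGroup.of 0 * FreeGroup.of 1)⁻¹,
    (FreeGroup.of 0 * FreeGroup.of 1) ^ 3 }

/-- The reduced braid group `B̄₃ = ⟨σ₁, σ₂ ∣ σ₁σ₂σ₁ = σ₂σ₁σ₂, (σ₁σ₂)³ = 1⟩`. -/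
abbrev Bbar3 : Type := PresentedGroup bbar3Rels

/-- The generator `σ₁` of `B̄₃`. -/
def σ1 : Bbar3 := PresentedGroup.of 0

/-- The generator `σ₂` of `B̄₃`. -/
def σ2 : Bbar3 := PresentedGroup.of 1

namespace Stmt

def a : FreeGroup (Fin 6) := FreeGroup.of 0
def a' : FreeGroup (Fin 6) := FreeGroup.of 1
def c : FreeGroup (Fin 6) := FreeGroup.of 2
def c' : FreeGroup (Fin 6) := FreeGroup.of 3
def d : FreeGroup (Fin 6) := FreeGroup.of 4
def d' : FreeGroup (Fin 6) := FreeGroup.of 5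

/-- The set of relators. -/
def rels : Set (FreeGroup (Fin 6)) :=
  { d * c * (d' * c')⁻¹,
    d' * c' * (c * d')⁻¹,
    c * d' * (c' * d)⁻¹,
    d * a * (a * d')⁻¹,
    d' * a' * (a' * d)⁻¹,
    d * a * a' * a * (d' * a' * a * a')⁻¹,
    a⁻¹ * a' * a * c⁻¹,
    a'⁻¹ * a * a' * c'⁻¹,
    d * c * a * d' * c' * a',
    c * c'⁻¹,
    c' * d⁻¹,
    d * d'⁻¹ }

end Stmt

set_option maxHeartbeats 1000000 in
/-- Adding the relations `γ = γ' = δ = δ'` to the relations R₁₁, the resulting group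
is abelian. -/
theorem stmt17 : ∀ x y : PresentedGroup Stmt.rels, x * y = y * x := by
  have rel1 : ∀ r ∈ Stmt.rels, PresentedGroup.mk Stmt.rels r = 1 := fun r hr =>
    (QuotientGroup.eq_one_iff r).mpr (Subgroup.subset_normalClosure hr)
  set F := PresentedGroup.mk Stmt.rels with hF
  set A := F Stmt.a; set A' := F Stmt.a'; set C := F Stmt.c; set C' := F Stmt.c'; set D := F Stmt.d; set D' := F Stmt.d'
  have hCC' : C = C' := by
    have := rel1 (Stmt.c * Stmt.c'⁻¹) (Set.mem_insert_of_mem _ (Set.mem_insert_of_mem _ (Set.mem_insert_of_mem _ (Set.mem_insert_of_mem _ (Set.mem_insert_of_mem _ (Set.mem_insert_of_mem _ (Set.mem_insert_of_mem _ (Set.mem_insert_of_mem _ (Set.mem_insert_of_mem _ (Set.mem_insert _ _)))))))))); rw [map_mul, map_inv] at this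
    exact mul_inv_eq_one.mp this
  have hC'D : C' = D := by
    have := rel1 (Stmt.c' * Stmt.d⁻¹) (Set.mem_insert_of_mem _ (Set.mem_insert_of_mem _ (Set.mem_insert_of_mem _ (Set.mem_insert_of_mem _ (Set.mem_insert_of_mem _ (Set.mem_insert_of_mem _ (Set.mem_insert_of_mem _ (Set.mem_insert_of_mem _ (Set.mem_insert_of_mem _ (Set.mem_insert_of_mem _ (Set.mem_insert _ _))))))))))); rw [map_mul, map_inv] at this
    exact mul_inv_eq_one.mp this
  have hDD' : D = D' := by
    have := rel1 (Stmt.d * Stmt.d'⁻¹) (Set.mem_insert_of_mem _ (Set.mem_insert_of_mem _ (Set.mem_insert_of_mem _ (Set.mem_insert_of_mem _ (Set.mem_insert_of_mem _ (Set.mem_insert_of_mem _ (Set.mem_insert_of_mem _ (Set.mem_insert_of_mem _ (Set.mem_insert_of_mem _ (Set.mem_insert_of_mem _ (Set.mem_insert_of_mem _ (rfl)))))))))))); rw [map_mul, map_inv] at this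
    exact mul_inv_eq_one.mp this
  -- Stmt.d * Stmt.a = Stmt.a * Stmt.d'
  have h4 : D * A = A * D' := by
    have := rel1 (Stmt.d * Stmt.a * (Stmt.a * Stmt.d')⁻¹) (Set.mem_insert_of_mem _ (Set.mem_insert_of_mem _ (Set.mem_insert_of_mem _ (Set.mem_insert _ _))))
    rw [map_mul, map_inv, map_mul] at this
    exact mul_inv_eq_one.mp this
  -- Stmt.a⁻¹ * Stmt.a' * Stmt.a = Stmt.c
  have h7 : A⁻¹ * A' * A = C := by
    have := rel1 (Stmt.a⁻¹ * Stmt.a' * Stmt.a * Stmt.c⁻¹) (Set.mem_insert_of_mem _ (Set.mem_insert_of_mem _ (Set.mem_insert_of_mem _ (Set.mem_insert_of_mem _ (Set.mem_insert_of_mem _ (Set.mem_insert_of_mem _ (Set.mem_insert _ _)))))))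
    rw [map_mul, map_inv, map_mul, map_mul, map_inv] at this
    exact mul_inv_eq_one.mp this
  have h8 : A'⁻¹ * A * A' = C' := by
    have := rel1 (Stmt.a'⁻¹ * Stmt.a * Stmt.a' * Stmt.c'⁻¹) (Set.mem_insert_of_mem _ (Set.mem_insert_of_mem _ (Set.mem_insert_of_mem _ (Set.mem_insert_of_mem _ (Set.mem_insert_of_mem _ (Set.mem_insert_of_mem _ (Set.mem_insert_of_mem _ (Set.mem_insert _ _))))))))
    rw [map_mul, map_inv, map_mul, map_mul, map_inv] at this
    exact mul_inv_eq_one.mp this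
  -- A commutes with C
  have hcomm : C * A = A * C := by
    rw [hCC', hC'D] at *
    calc D * A = A * D' := h4
    _ = A * D := by rw [hDD']
  -- A' = A * C * A⁻¹, so A' = C
  have hA' : A' = C := by
    have : A' = A * C * A⁻¹ := by
      rw [← h7]; group
    rw [this, hcomm.symm] ; group
  have hA : A = C := by
    have : A = A' * C' * A'⁻¹ := by rw [← h8]; group
    rw [this, hA', ← hCC']; group
  -- every generator equals C
  have hgen : ∀ i : Fin 6, (PresentedGroup.of i : PresentedGroup Stmt.rels) = C := by
    intro i
    fin_cases i
    · exact hA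
    · exact hA'
    · rfl
    · exact hCC'.symm
    · exact (hCC'.trans hC'D).symm
    · exact (hCC'.trans (hC'D.trans hDD')).symm
  have hmem : ∀ x : PresentedGroup Stmt.rels, x ∈ Subgroup.closure ({C} : Set (PresentedGroup Stmt.rels)) := by
    intro x
    have htop : x ∈ (⊤ : Subgroup (PresentedGroup Stmt.rels)) := trivial
    rw [← PresentedGroup.closure_range_of Stmt.rels] at htop
    refine Subgroup.closure_mono ?_ htop
    rintro _ ⟨i, rfl⟩
    simp [hgen i]
  intro x y
  obtain ⟨m, hm⟩ := Subgroup.mem_closure_singleton.mp (hmem x)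
  obtain ⟨n, hn⟩ := Subgroup.mem_closure_singleton.mp (hmem y)
  rw [← hm, ← hn, ← zpow_add, ← zpow_add, add_comm]
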